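/- arXiv:1604.02075 — 2 statements merged into one kernel-verified Lean document; each statement's English description precedes it below -/
import Mathlib

section
/- There do not exist polynomials P, Q ∈ ℂ[X] with Q ≠ 0 such that for all but finitely many integers d ≥ 1, both d·P(exp(π·i/(2d+1))) = (d − 1)·Q(exp(π·i/(2d+1))) and d·P(exp(−π·i/(2d+1))) = (d − 1)·Q(exp(−π·i/(2d+1))) hold. -/
open Complex Polynomial Filter
open scoped Topology

private lemma aux_tendsto :
    Tendsto (fun d : ℕ => (Real.pi : ℂ) * Complex.I / (2 * d + 1)) atTop (nhdsWithin 0 {(0:ℂ)}ᶜ) := by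
  have h1 : Tendsto (fun d : ℕ => (2 * (d : ℝ) + 1)) atTop atTop := by
    apply tendsto_atTop_add_const_right
    exact (tendsto_natCast_atTop_atTop (R := ℝ)).const_mul_atTop two_pos
  have h2 : Tendsto (fun d : ℕ => (2 * (d : ℝ) + 1)⁻¹) atTop (𝓝 0) :=
    tendsto_inv_atTop_zero.comp h1
  have h3 : Tendsto (fun d : ℕ => (((2 * (d : ℝ) + 1)⁻¹ : ℝ) : ℂ)) atTop (𝓝 0) := by
    have := (Complex.continuous_ofReal.tendsto 0).comp h2
    rw [Complex.ofReal_zero] at this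
    exact this
  have h4 : Tendsto (fun d : ℕ => (Real.pi : ℂ) * Complex.I / (2 * d + 1)) atTop (𝓝 0) := by
    have h5 := h3.const_mul ((Real.pi : ℂ) * Complex.I)
    rw [mul_zero] at h5
    refine h5.congr fun d => ?_
    push_cast
    ring
  apply tendsto_nhdsWithin_of_tendsto_nhds_of_eventually_within _ h4
  filter_upwards with d
  have hden : (2 * (d : ℂ) + 1) ≠ 0 := by
    intro h
    have := congrArg Complex.re h
    push_cast at this
    simp at this
    nlinarith [Nat.cast_nonneg (α := ℝ) d]
  simp only [Set.mem_compl_iff, Set.mem_singleton_iff]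
  exact div_ne_zero
    (mul_ne_zero (Complex.ofReal_ne_zero.mpr Real.pi_ne_zero) Complex.I_ne_zero) hden

theorem no_rational_interpolation :
    ¬ ∃ (P Q : Polynomial ℂ), Q ≠ 0 ∧ ∃ N : ℕ, ∀ d : ℕ, N ≤ d → 1 ≤ d →
      (d : ℂ) * P.eval (Complex.exp ((Real.pi : ℂ) * Complex.I / (2 * d + 1))) =
          ((d : ℂ) - 1) * Q.eval (Complex.exp ((Real.pi : ℂ) * Complex.I / (2 * d + 1))) ∧
        (d : ℂ) * P.eval (Complex.exp (-((Real.pi : ℂ) * Complex.I) / (2 * d + 1))) =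
          ((d : ℂ) - 1) * Q.eval (Complex.exp (-((Real.pi : ℂ) * Complex.I) / (2 * d + 1))) := by
  rintro ⟨P, Q, hQ, N, h⟩
  set π : ℂ := (Real.pi : ℂ) with hπdef
  -- the two entire functions
  set A : ℂ → ℂ := fun t =>
    (P - Q).eval (Complex.exp t) * (π * Complex.I - t) + 2 * t * Q.eval (Complex.exp t) with hA
  set B : ℂ → ℂ := fun t =>
    (P - Q).eval (Complex.exp (-t)) * (π * Complex.I - t) + 2 * t * Q.eval (Complex.exp (-t))
    with hB
  have hdiffA : Differentiable ℂ A := by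
    apply Differentiable.add
    · exact (((P - Q).differentiable).comp Complex.differentiable_exp).mul
        ((differentiable_const _).sub differentiable_id)
    · exact ((differentiable_const _).mul differentiable_id).mul
        ((Q.differentiable).comp Complex.differentiable_exp)
  have hdiffB : Differentiable ℂ B := by
    apply Differentiable.add
    · exact (((P - Q).differentiable).comp (Complex.differentiable_exp.comp differentiable_neg)).mul
        ((differentiable_const _).sub differentiable_id)
    · exact ((differentiable_const _).mul differentiable_id).mul
        ((Q.differentiable).comp (Complex.differentiable_exp.comp differentiable_neg))
  -- vanishing at the sample points
  have hzero : ∀ d : ℕ, max N 1 ≤ d →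
      A (π * Complex.I / (2 * d + 1)) = 0 ∧ B (π * Complex.I / (2 * d + 1)) = 0 := by
    intro d hd
    obtain ⟨h1, h2⟩ := h d (le_trans (le_max_left _ _) hd) (le_trans (le_max_right _ _) hd)
    have hden : (2 * (d : ℂ) + 1) ≠ 0 := by
      intro hc
      have := congrArg Complex.re hc
      push_cast at this
      simp at this
      nlinarith [Nat.cast_nonneg (α := ℝ) d]
    constructor
    · simp only [hA, Polynomial.eval_sub]
      field_simp
      ring_nf
      ring_nf at h1
      linear_combination (2 * π * Complex.I) * h1
    · have h2' : (d : ℂ) * P.eval (Complex.exp (-(π * Complex.I / (2 * d + 1)))) =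
          ((d : ℂ) - 1) * Q.eval (Complex.exp (-(π * Complex.I / (2 * d + 1)))) := by
        rw [neg_div] at h2; exact h2
      simp only [hB, Polynomial.eval_sub]
      field_simp
      ring_nf
      ring_nf at h2'
      linear_combination (2 * π * Complex.I) * h2'
  -- identity theorem: A and B vanish everywhere
  have hfreqA : ∃ᶠ z in nhdsWithin 0 {(0:ℂ)}ᶜ, A z = 0 := by
    apply (aux_tendsto.comp (tendsto_add_atTop_nat (max N 1))).frequently
    apply Frequently.of_forall
    intro d
    exact (hzero (d + max N 1) (le_add_self)).1
  have hfreqB : ∃ᶠ z in nhdsWithin 0 {(0:ℂ)}ᶜ, B z = 0 := by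
    apply (aux_tendsto.comp (tendsto_add_atTop_nat (max N 1))).frequently
    apply Frequently.of_forall
    intro d
    exact (hzero (d + max N 1) (le_add_self)).2
  have hAzero : ∀ t : ℂ, A t = 0 := by
    intro t
    have := (hdiffA.differentiableOn.analyticOnNhd isOpen_univ).eqOn_zero_of_preconnected_of_frequently_eq_zero
      isPreconnected_univ (Set.mem_univ 0) hfreqA (Set.mem_univ t)
    simpa using this
  have hBzero : ∀ t : ℂ, B t = 0 := by
    intro t
    have := (hdiffB.differentiableOn.analyticOnNhd isOpen_univ).eqOn_zero_of_preconnected_of_frequently_eq_zero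
      isPreconnected_univ (Set.mem_univ 0) hfreqB (Set.mem_univ t)
    simpa using this
  -- combine: Q vanishes at exp t for all t ≠ 0
  have hQroot : ∀ t : ℂ, t ≠ 0 → Q.eval (Complex.exp t) = 0 := by
    intro t ht
    have h1 := hAzero t
    have h2 := hBzero (-t)
    simp only [hA, hB, neg_neg, Polynomial.eval_sub] at h1 h2
    have hπI : π * Complex.I ≠ 0 :=
      mul_ne_zero (by rw [hπdef]; exact Complex.ofReal_ne_zero.mpr Real.pi_ne_zero)
        Complex.I_ne_zero
    have hu : P.eval (Complex.exp t) - Q.eval (Complex.exp t) = 0 := by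
      have : (P.eval (Complex.exp t) - Q.eval (Complex.exp t)) * (2 * (π * Complex.I)) = 0 := by
        linear_combination h1 + h2
      rcases mul_eq_zero.mp this with h | h
      · exact h
      · exact absurd h (by simpa using hπI)
    have : 2 * t * Q.eval (Complex.exp t) = 0 := by
      linear_combination h1 - (π * Complex.I - t) * hu
    rcases mul_eq_zero.mp this with h | h
    · rcases mul_eq_zero.mp h with h' | h'
      · norm_num at h'
      · exact absurd h' ht
    · exact h
  -- hence Q has infinitely many roots
  apply hQ
  apply Polynomial.eq_zero_of_infinite_isRoot
  refine Set.infinite_of_injective_forall_mem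
    (f := fun n : ℕ => (Real.exp (n + 1) : ℂ)) ?_ ?_
  · intro a b hab
    simp only [Complex.ofReal_inj] at hab
    have h2 := Real.exp_injective hab
    have h3 : (a : ℝ) = b := by linarith
    exact_mod_cast h3
  · intro n
    have ht : ((n : ℂ) + 1) ≠ 0 := by
      have h1 : (((n + 1 : ℕ)) : ℂ) ≠ 0 := Nat.cast_ne_zero.mpr (Nat.succ_ne_zero n)
      push_cast at h1
      exact h1
    have := hQroot ((n : ℂ) + 1) ht
    simp only [Set.mem_setOf_eq, Polynomial.IsRoot]
    rw [show ((Real.exp (n + 1) : ℝ) : ℂ) = Complex.exp ((n : ℂ) + 1) by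
      rw [Complex.ofReal_exp]; push_cast; ring_nf]
    exact this
end

section
/- There do not exist polynomials P, Q ∈ ℂ[X], not both zero, such that for all but finitely many integers d ≥ 1 and for both signs ε ∈ {1, −1}, one has (d − 1)·P(exp(ε·π·i/(2d+1))) + d·Q(exp(ε·π·i/(2d+1))) = 0. -/
open Complex Polynomial Filter Topology
open scoped Real

/-!
Multiplying the relation at `d` by `2 / (2d + 1)` turns it into the vanishing of an entire function
of `w` at `w = 1 / (2d + 1)`. These points accumulate at `0`, so by the identity theorem the
function vanishes identically. Comparing its values at `w` and `w + 2`, where `exp (π i w)` is the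
same but the coefficients are not, forces `P` and `Q` to vanish on all of `ℂˣ`.
-/

/-- With `w = 1 / (2d + 1)` one has `d - 1 = (1 - 3w) / (2w)` and `d = (1 - w) / (2w)`. -/
noncomputable def clearedRelation (P Q : ℂ[X]) (w : ℂ) : ℂ :=
  (1 - 3 * w) * P.eval (exp (π * I * w)) + (1 - w) * Q.eval (exp (π * I * w))

lemma differentiable_clearedRelation (P Q : ℂ[X]) : Differentiable ℂ (clearedRelation P Q) := by
  unfold clearedRelation
  fun_prop

lemma clearedRelation_eq_zero_of_frequently {P Q : ℂ[X]}
    (h : ∃ᶠ w in 𝓝[≠] 0, clearedRelation P Q w = 0) : clearedRelation P Q = 0 :=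
  funext fun w =>
    (analyticOnNhd_univ_iff_differentiable.mpr (differentiable_clearedRelation P Q)
      |>.eqOn_zero_of_preconnected_of_frequently_eq_zero isPreconnected_univ (Set.mem_univ 0) h)
      (Set.mem_univ w)

lemma clearedRelation_inv_two_mul_add_one (P Q : ℂ[X]) (d : ℕ) :
    clearedRelation P Q (2 * d + 1)⁻¹ = 2 * (2 * d + 1 : ℂ)⁻¹ *
      ((d - 1) * P.eval (exp (π * I / (2 * d + 1))) + d * Q.eval (exp (π * I / (2 * d + 1)))) := by
  have hd : (2 * d + 1 : ℂ) ≠ 0 := by exact_mod_cast (2 * d).succ_ne_zero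
  simp only [clearedRelation, ← div_eq_mul_inv]
  field_simp
  ring

lemma tendsto_inv_two_mul_add_one_nhdsNE :
    Tendsto (fun d : ℕ => (2 * d + 1 : ℂ)⁻¹) atTop (𝓝[≠] 0) := by
  have h : Tendsto (fun d : ℕ => 2 * d + 1) atTop atTop :=
    tendsto_atTop_mono (fun d => show d ≤ 2 * d + 1 by omega) tendsto_id
  have := tendsto_inv₀_cobounded'.comp ((tendsto_natCast_atTop_cobounded (α := ℂ)).comp h)
  exact this.congr fun d => by simp

lemma Polynomial.eq_zero_of_forall_eval_exp_eq_zero {P : ℂ[X]} (h : ∀ w, P.eval (exp w) = 0) :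
    P = 0 := by
  refine P.eq_zero_of_infinite_isRoot ((Set.finite_singleton 0).infinite_compl.mono ?_)
  rw [← range_exp]
  rintro _ ⟨w, rfl⟩
  exact h w

lemma eq_zero_of_clearedRelation_eq_zero {P Q : ℂ[X]} (h : clearedRelation P Q = 0) :
    P = 0 ∧ Q = 0 := by
  have hper (w : ℂ) : exp (π * I * (w + 2)) = exp (π * I * w) := by
    rw [show π * I * (w + 2) = π * I * w + 2 * π * I by ring, exp_periodic]
  have hboth (w : ℂ) : P.eval (exp (π * I * w)) = 0 ∧ Q.eval (exp (π * I * w)) = 0 := by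
    have h₀ := congr_fun h w
    have h₂ := congr_fun h (w + 2)
    simp only [clearedRelation, hper, Pi.zero_apply] at h₀ h₂
    constructor
    · linear_combination (-1 / 2 : ℂ) * h₀ + (1 - w) / 4 * (h₀ - h₂)
    · linear_combination (3 / 2 : ℂ) * h₀ + (3 * w - 1) / 4 * (h₀ - h₂)
  have hexp (w : ℂ) : exp w = exp (π * I * (w / (π * I))) := by
    rw [mul_div_cancel₀ _ (mul_ne_zero (ofReal_ne_zero.mpr Real.pi_ne_zero) I_ne_zero)]
  exact ⟨eq_zero_of_forall_eval_exp_eq_zero fun w => hexp w ▸ (hboth _).1,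
    eq_zero_of_forall_eval_exp_eq_zero fun w => hexp w ▸ (hboth _).2⟩

theorem linear_independence_on_Gamma :
    ¬ ∃ (P Q : Polynomial ℂ), (P ≠ 0 ∨ Q ≠ 0) ∧ ∃ N : ℕ, ∀ d : ℕ, N ≤ d → 1 ≤ d →
      ∀ ε : ℤ, (ε = 1 ∨ ε = -1) →
        ((d : ℂ) - 1) *
            P.eval (Complex.exp ((ε : ℂ) * Real.pi * Complex.I / (2 * d + 1))) +
          (d : ℂ) *
            Q.eval (Complex.exp ((ε : ℂ) * Real.pi * Complex.I / (2 * d + 1))) = 0 := by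
  rintro ⟨P, Q, hPQ, N, hrel⟩
  have hzero : ∀ᶠ d : ℕ in atTop, clearedRelation P Q (2 * d + 1)⁻¹ = 0 := by
    filter_upwards [eventually_ge_atTop N, eventually_ge_atTop 1] with d hN h1
    have hd := hrel d hN h1 1 (Or.inl rfl)
    simp only [Int.cast_one, one_mul] at hd
    rw [clearedRelation_inv_two_mul_add_one, hd, mul_zero]
  have hPQ0 := eq_zero_of_clearedRelation_eq_zero <| clearedRelation_eq_zero_of_frequently <|
    tendsto_inv_two_mul_add_one_nhdsNE.frequently hzero.frequently
  tauto
end
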